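/- For any real s > 20 and any p ∈ [0, 1/2], let D be the distribution on ℤ×ℤ obtained by sampling independent w, x, y uniformly from ⟨s⟩, conditioning on both w + x ∈ ⟨s·p⟩ and w + y ∈ ⟨s·p⟩, and outputting (w + x, w + y). Then Δ_MR(U_{sp} ⊗ U_{sp}, D) ≤ (1 − p)^(−1) · (1 + 4/s). -/

import Mathlib

/-!
For `z ∈ ⟨sp⟩²`, the triples `(w, x, y) ∈ ⟨s⟩³` with `(w + x, w + y) = z` correspond to the
`w ∈ ⟨s⟩` with `z.1 - w, z.2 - w ∈ ⟨s⟩`. Their number lies between `2(⌊s/2⌋ - ⌊sp/2⌋) + 1`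
(every `w` with `|w| ≤ ⌊s/2⌋ - ⌊sp/2⌋` qualifies) and `|⟨s⟩| = 2⌊s/2⌋ + 1`. Since `D` is this count
normalised over `⟨sp⟩²`, its ratio to the uniform distribution on `⟨sp⟩²` is at most the ratio of
the two bounds, which is at most `(1 - p)⁻¹ (1 + 4/s)`.
-/

/-- `⟨s⟩`: the set of integers `{-⌊s/2⌋, …, ⌊s/2⌋}`. -/
noncomputable def intRange (s : ℝ) : Finset ℤ := Finset.Icc (-⌊s / 2⌋) ⌊s / 2⌋

/-- The Max-Ratio distance between two mass functions `D₀, D₁` (with the same support):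
the smallest `λ ≥ 1` such that `D₁ x ∈ [λ⁻¹·D₀ x, λ·D₀ x]` for every `x` in the support. -/
noncomputable def MRdist {α : Type*} (D₀ D₁ : α → ℝ) : ℝ :=
  sInf {l : ℝ | 1 ≤ l ∧ ∀ x, D₀ x ≠ 0 → l⁻¹ * D₀ x ≤ D₁ x ∧ D₁ x ≤ l * D₀ x}

open Finset

theorem MRdist_le {α : Type*} {D₀ D₁ : α → ℝ} {l : ℝ} (hl : 1 ≤ l)
    (h : ∀ x, D₀ x ≠ 0 → l⁻¹ * D₀ x ≤ D₁ x ∧ D₁ x ≤ l * D₀ x) : MRdist D₀ D₁ ≤ l :=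
  csInf_le ⟨1, fun _ hl' => hl'.1⟩ ⟨hl, h⟩

theorem div_sum_mem_Icc_of_bounds {α : Type*} {A : Finset α} {c : α → ℝ} {K J L : ℝ}
    (hK : 0 < K) (hJK : J ≤ L * K) (hc : ∀ z ∈ A, K ≤ c z ∧ c z ≤ J) {z : α} (hz : z ∈ A) :
    c z / ∑ y ∈ A, c y ∈ Set.Icc (L⁻¹ * (#A : ℝ)⁻¹) (L * (#A : ℝ)⁻¹) := by
  have hn : (0 : ℝ) < #A := Nat.cast_pos.2 (card_pos.2 ⟨z, hz⟩)
  have hL : 0 < L := pos_of_mul_pos_left ((hK.trans_le (hc z hz).1).trans_le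
    ((hc z hz).2.trans hJK)) hK.le
  have hsum_lo : #A * K ≤ ∑ y ∈ A, c y := by
    simpa using card_nsmul_le_sum A c K fun y hy => (hc y hy).1
  have hsum_hi : ∑ y ∈ A, c y ≤ #A * J := by
    simpa using sum_le_card_nsmul A c J fun y hy => (hc y hy).2
  have hsum : 0 < ∑ y ∈ A, c y := (mul_pos hn hK).trans_le hsum_lo
  obtain ⟨hcK, hcJ⟩ := hc z hz
  constructor
  · rw [← mul_inv, inv_eq_one_div, div_le_div_iff₀ (by positivity) hsum]
    nlinarith [mul_le_mul_of_nonneg_left hJK hn.le,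
      mul_le_mul_of_nonneg_left hcK (mul_pos hL hn).le]
  · rw [← div_eq_mul_inv, div_le_div_iff₀ hsum hn]
    nlinarith [mul_le_mul_of_nonneg_left hJK hn.le, mul_le_mul_of_nonneg_left hsum_lo hL.le]

theorem MRdist_uniform_le_of_ratio_le {α : Type*} {A : Finset α} {c : α → ℝ} {K J L : ℝ}
    (hL : 1 ≤ L) (hK : 0 < K) (hJK : J ≤ L * K) (hc : ∀ z ∈ A, K ≤ c z ∧ c z ≤ J) :
    MRdist (Set.indicator (↑A) fun _ => (#A : ℝ)⁻¹)
      (Set.indicator (↑A) fun z => c z / ∑ y ∈ A, c y) ≤ L := by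
  refine MRdist_le hL fun z hz => ?_
  have hzA : z ∈ A := by
    by_contra h
    exact hz (Set.indicator_of_notMem (by simpa using h) _)
  simp only [Set.indicator_of_mem (mem_coe.2 hzA)]
  exact div_sum_mem_Icc_of_bounds hK hJK hc hzA

theorem indicator_inv_card_mul_indicator_inv_card {α β : Type*} (A : Finset α) (B : Finset β)
    (z : α × β) :
    Set.indicator (↑A) (fun _ => (#A : ℝ)⁻¹) z.1 * Set.indicator (↑B) (fun _ => (#B : ℝ)⁻¹) z.2 =
      Set.indicator (↑(A ×ˢ B)) (fun _ => (#(A ×ˢ B) : ℝ)⁻¹) z := by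
  classical
  simp only [Set.indicator_apply, mem_coe, mem_product, card_product, Nat.cast_mul, mul_inv]
  split_ifs <;> simp_all

theorem card_filter_mem_and_mem_eq_sum {γ α β : Type*} [DecidableEq α] [DecidableEq β]
    (Q : Finset γ) (f : γ → α) (g : γ → β) (A : Finset α) (B : Finset β) :
    #{q ∈ Q | f q ∈ A ∧ g q ∈ B} = ∑ z ∈ A ×ˢ B, #{q ∈ Q | f q = z.1 ∧ g q = z.2} := by
  simpa only [mem_product, Prod.ext_iff] using
    (sum_card_fiberwise_eq_card_filter Q (A ×ˢ B) fun q => (f q, g q)).symm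

theorem card_filter_add_eq_add_eq {G : Type*} [AddCommGroup G] [DecidableEq G]
    (S : Finset G) (a b : G) :
    #{q ∈ S ×ˢ S ×ˢ S | q.1 + q.2.1 = a ∧ q.1 + q.2.2 = b} = #{w ∈ S | a - w ∈ S ∧ b - w ∈ S} := by
  refine card_nbij' Prod.fst (fun w => (w, a - w, b - w)) ?_ ?_ ?_ ?_
  · rintro ⟨w, x, y⟩ h
    simp only [coe_filter, mem_product, Set.mem_ofPred_eq] at h ⊢
    obtain ⟨⟨hw, hx, hy⟩, rfl, rfl⟩ := h
    simpa using ⟨hw, hx, hy⟩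
  · intro w h
    simp only [coe_filter, mem_product, Set.mem_ofPred_eq] at h ⊢
    simpa using h
  · rintro ⟨w, x, y⟩ h
    simp only [coe_filter, mem_product, Set.mem_ofPred_eq] at h
    obtain ⟨-, rfl, rfl⟩ := h
    simp
  · intro w _
    rfl

theorem card_Icc_sub_le_card_filter_sub_mem {M m a b : ℤ} (hmM : m ≤ M)
    (ha : a ∈ Icc (-m) m) (hb : b ∈ Icc (-m) m) :
    2 * (M - m) + 1 ≤ (#{w ∈ Icc (-M) M | a - w ∈ Icc (-M) M ∧ b - w ∈ Icc (-M) M} : ℤ) := by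
  have hsub : Icc (m - M) (M - m) ⊆ {w ∈ Icc (-M) M | a - w ∈ Icc (-M) M ∧ b - w ∈ Icc (-M) M} := by
    intro w hw
    simp only [mem_Icc, mem_filter] at ha hb hw ⊢
    omega
  calc 2 * (M - m) + 1 = (#(Icc (m - M) (M - m)) : ℤ) := by
        rw [Int.card_Icc]; omega
    _ ≤ _ := by exact_mod_cast card_le_card hsub

theorem card_intRange {s : ℝ} (hs : 0 ≤ s) : ((#(intRange s) : ℕ) : ℝ) = 2 * ⌊s / 2⌋ + 1 := by
  have h : (0 : ℤ) ≤ ⌊s / 2⌋ := Int.floor_nonneg.2 (by positivity)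
  have : ((#(intRange s) : ℕ) : ℤ) = 2 * ⌊s / 2⌋ + 1 := by
    rw [intRange, Int.card_Icc]; omega
  exact_mod_cast this

theorem two_mul_floor_half_add_one_le {s p : ℝ} (hs : 3 ≤ s) (hp0 : 0 ≤ p) (hp1 : p ≤ 1 / 2) :
    2 * (⌊s / 2⌋ : ℝ) + 1 ≤ (1 - p)⁻¹ * (1 + 4 / s) * (2 * (⌊s / 2⌋ - ⌊s * p / 2⌋) + 1) := by
  have hM := Int.sub_one_lt_floor (s / 2)
  have hm := Int.floor_le (s * p / 2)
  rw [show (1 - p)⁻¹ * (1 + 4 / s) = (s + 4) / ((1 - p) * s) by field_simp,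
    div_mul_eq_mul_div, le_div_iff₀ (by nlinarith)]
  nlinarith [mul_nonneg hp0 (by linarith : (0 : ℝ) ≤ s)]

theorem MRdist_pair_conditioned_from_uniform (s : ℝ) (hs : 20 < s)
    (p : ℝ) (hp0 : 0 ≤ p) (hp1 : p ≤ 1 / 2) :
    MRdist
      -- `U_{sp} ⊗ U_{sp}`
      (fun z : ℤ × ℤ =>
        Set.indicator (↑(intRange (s * p)) : Set ℤ)
            (fun _ => ((intRange (s * p)).card : ℝ)⁻¹) z.1 *
          Set.indicator (↑(intRange (s * p)) : Set ℤ)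
            (fun _ => ((intRange (s * p)).card : ℝ)⁻¹) z.2)
      -- `D`: the distribution of `(w + x, w + y)` with `w, x, y ← U_s` independent,
      -- conditioned on `w + x ∈ ⟨s·p⟩` and `w + y ∈ ⟨s·p⟩`
      (Set.indicator ((↑(intRange (s * p)) : Set ℤ) ×ˢ (↑(intRange (s * p)) : Set ℤ))
        fun z : ℤ × ℤ =>
          (((intRange s ×ˢ intRange s ×ˢ intRange s).filter fun q =>
              q.1 + q.2.1 = z.1 ∧ q.1 + q.2.2 = z.2).card : ℝ) /
            (((intRange s ×ˢ intRange s ×ˢ intRange s).filter fun q =>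
              q.1 + q.2.1 ∈ intRange (s * p) ∧ q.1 + q.2.2 ∈ intRange (s * p)).card : ℝ))
      ≤ (1 - p)⁻¹ * (1 + 4 / s) := by
  set R := intRange (s * p)
  set S := intRange s
  have hmM : ⌊s * p / 2⌋ ≤ ⌊s / 2⌋ := Int.floor_le_floor (by nlinarith)
  have hL : 1 ≤ (1 - p)⁻¹ * (1 + 4 / s) :=
    one_le_mul_of_one_le_of_one_le (one_le_inv₀ (by linarith) |>.2 (by linarith))
      (le_add_of_nonneg_right (by positivity))
  have hK : (0 : ℝ) < 2 * (⌊s / 2⌋ - ⌊s * p / 2⌋) + 1 := by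
    have : ((⌊s * p / 2⌋ : ℤ) : ℝ) ≤ ⌊s / 2⌋ := by exact_mod_cast hmM
    linarith
  have hT : (#{q ∈ S ×ˢ S ×ˢ S | q.1 + q.2.1 ∈ R ∧ q.1 + q.2.2 ∈ R} : ℝ) =
      ∑ z ∈ R ×ˢ R, (#{q ∈ S ×ˢ S ×ˢ S | q.1 + q.2.1 = z.1 ∧ q.1 + q.2.2 = z.2} : ℝ) := by
    rw [card_filter_mem_and_mem_eq_sum, Nat.cast_sum]
  simp only [indicator_inv_card_mul_indicator_inv_card, ← coe_product, hT]
  refine MRdist_uniform_le_of_ratio_le hL hK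
    (two_mul_floor_half_add_one_le (by linarith) hp0 hp1) fun z hz => ?_
  rw [mem_product] at hz
  rw [card_filter_add_eq_add_eq, ← card_intRange (by linarith)]
  constructor
  · exact_mod_cast card_Icc_sub_le_card_filter_sub_mem hmM hz.1 hz.2
  · exact_mod_cast card_filter_le _ _
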